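/- arXiv:1410.7226 — 5 statements merged into one kernel-verified Lean document; each statement's English description precedes it below -/
import Mathlib

section
/- Let x ≥ 1 be an integer, let Γ = ℤ/(3x) × ℤ/x, and let A = {(1,0), (−1,1)} ⊆ Γ. Then every element of Γ can be written as a sum of at most 3x − 2 elements of A (with repetition), i.e., the Cayley digraph Cay(Γ, A) has diameter at most 3x − 2. -/
theorem stmt_3 (x : ℕ) (hx : 1 ≤ x) :
    ∀ g : ZMod (3 * x) × ZMod x, ∃ i j : ℕ, i + j ≤ 3 * x - 2 ∧
      g = i • ((1 : ZMod (3 * x)), (0 : ZMod x))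
          + j • ((-1 : ZMod (3 * x)), (1 : ZMod x)) := by
  intro g
  haveI : NeZero (3 * x) := ⟨by omega⟩
  haveI : NeZero x := ⟨by omega⟩
  obtain ⟨a, b⟩ := g
  set b0 := b.val with hb0
  set s := (a.val + b0) % (3 * x) with hs
  have hsl : s < 3 * x := Nat.mod_lt _ (by omega)
  have hbl : b0 < x := b.val_lt
  have hcb : ((b0 : ℕ) : ZMod x) = b := ZMod.natCast_rightInverse b
  have h1 : ((s : ℕ) : ZMod (3 * x)) = a + (b0 : ZMod (3 * x)) := by
    rw [hs, ZMod.natCast_mod, Nat.cast_add, ZMod.natCast_rightInverse a]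
  by_cases hc : s < 2 * x
  · refine ⟨s, b0, by omega, ?_⟩
    simp only [Prod.smul_mk, Prod.mk_add_mk, nsmul_eq_mul, mul_one, mul_zero,
      mul_neg, add_zero, zero_add, Prod.mk.injEq]
    constructor
    · rw [h1]; ring
    · rw [hcb]
  · refine ⟨s - 2 * x, b0 + x, by omega, ?_⟩
    simp only [Prod.smul_mk, Prod.mk_add_mk, nsmul_eq_mul, mul_one, mul_zero,
      mul_neg, add_zero, zero_add, Prod.mk.injEq]
    constructor
    · have h2 : ((s - 2 * x : ℕ) : ZMod (3 * x)) = (s : ZMod (3 * x)) - 2 * x := by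
        have : (s - 2 * x) + 2 * x = s := by omega
        have := congrArg (fun n : ℕ => (n : ZMod (3 * x))) this
        push_cast at this
        linear_combination this
      rw [h2, h1]
      push_cast
      have h3 : ((3 * x : ℕ) : ZMod (3 * x)) = 0 := ZMod.natCast_self _
      push_cast at h3
      linear_combination h3
    · push_cast
      rw [hcb, ZMod.natCast_self]
      ring
end

section
/- Let x ≥ 2 be an integer, Γ = ℤ/(3x) × ℤ/x, and A = {(1,0), (−1,1)}. The elements (2x, x−1) and (x, x−1) of Γ cannot be written as a sum of fewer than 3x − 2 elements of A; hence Cay(Γ, A) has diameter exactly 3x − 2. -/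
lemma hsmul (x i j : ℕ) :
    i • ((1 : ZMod (3*x)), (0 : ZMod x)) + j • ((-1 : ZMod (3*x)), (1 : ZMod x)) =
      (((i : ZMod (3*x)) - j), (j : ZMod x)) := by
  simp [Prod.ext_iff, nsmul_eq_mul, sub_eq_add_neg, mul_neg]

lemma extract (x i j a : ℕ)
    (h : (((a : ℕ) : ZMod (3*x)), ((x - 1 : ℕ) : ZMod x)) =
      i • ((1 : ZMod (3*x)), (0 : ZMod x)) + j • ((-1 : ZMod (3*x)), (1 : ZMod x))) :
    i % (3*x) = (a + j) % (3*x) ∧ j % x = (x - 1) % x := by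
  rw [hsmul, Prod.ext_iff] at h
  obtain ⟨h1, h2⟩ := h
  refine ⟨?_, (ZMod.natCast_eq_natCast_iff _ _ _).mp h2.symm⟩
  have : ((i : ℕ) : ZMod (3*x)) = ((a + j : ℕ) : ZMod (3*x)) := by
    push_cast; linear_combination -h1
  exact (ZMod.natCast_eq_natCast_iff _ _ _).mp this

lemma lb (x i j a : ℕ) (hx : 2 ≤ x) (ha : a = 2*x ∨ a = x)
    (hij : i + j < 3 * x - 2)
    (h : (((a : ℕ) : ZMod (3*x)), ((x - 1 : ℕ) : ZMod x)) =
      i • ((1 : ZMod (3*x)), (0 : ZMod x)) + j • ((-1 : ZMod (3*x)), (1 : ZMod x))) :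
    False := by
  obtain ⟨hi, hj⟩ := extract x i j a h
  have hj2 : j % x = x - 1 := hj.trans (Nat.mod_eq_of_lt (by omega))
  have hdm := Nat.div_add_mod j x
  rw [hj2] at hdm
  set q := j / x with hq
  have hle : q * x ≤ j := Nat.div_mul_le_self j x
  have hq3 : q < 3 := by
    by_contra hc
    push_neg at hc
    have : 3 * x ≤ q * x := Nat.mul_le_mul_right x hc
    omega
  have himod : i % (3*x) ≤ i := Nat.mod_le i (3*x)
  interval_cases q
  · have hj' : j = x - 1 := by omega
    rcases ha with ha | ha
    · have hi2 : i % (3*x) = 3*x - 1 := hi.trans (by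
        rw [ha, hj', show 2*x + (x-1) = 3*x - 1 by omega]
        exact Nat.mod_eq_of_lt (by omega))
      omega
    · have hi2 : i % (3*x) = 2*x - 1 := hi.trans (by
        rw [ha, hj', show x + (x-1) = 2*x - 1 by omega]
        exact Nat.mod_eq_of_lt (by omega))
      omega
  · have hj' : j = 2*x - 1 := by omega
    rcases ha with ha | ha
    · have hi2 : i % (3*x) = x - 1 := hi.trans (by
        rw [ha, hj', show 2*x + (2*x-1) = (x - 1) + 1*(3*x) by omega,
          Nat.add_mul_mod_self_right]
        exact Nat.mod_eq_of_lt (by omega))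
      omega
    · have hi2 : i % (3*x) = 3*x - 1 := hi.trans (by
        rw [ha, hj', show x + (2*x-1) = 3*x - 1 by omega]
        exact Nat.mod_eq_of_lt (by omega))
      omega
  · omega

theorem stmt_4 (x : ℕ) (hx : 2 ≤ x) :
    (¬ ∃ i j : ℕ, i + j < 3 * x - 2 ∧
      (((2 * x : ℕ) : ZMod (3 * x)), ((x - 1 : ℕ) : ZMod x)) =
        i • ((1 : ZMod (3 * x)), (0 : ZMod x))
          + j • ((-1 : ZMod (3 * x)), (1 : ZMod x))) ∧
    (¬ ∃ i j : ℕ, i + j < 3 * x - 2 ∧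
      (((x : ℕ) : ZMod (3 * x)), ((x - 1 : ℕ) : ZMod x)) =
        i • ((1 : ZMod (3 * x)), (0 : ZMod x))
          + j • ((-1 : ZMod (3 * x)), (1 : ZMod x))) ∧
    (∀ g : ZMod (3 * x) × ZMod x, ∃ i j : ℕ, i + j ≤ 3 * x - 2 ∧
      g = i • ((1 : ZMod (3 * x)), (0 : ZMod x))
          + j • ((-1 : ZMod (3 * x)), (1 : ZMod x))) := by
  haveI : NeZero x := ⟨by omega⟩
  haveI : NeZero (3*x) := ⟨by omega⟩
  refine ⟨?_, ?_, ?_⟩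
  · rintro ⟨i, j, hij, h⟩; exact lb x i j (2*x) hx (Or.inl rfl) hij h
  · rintro ⟨i, j, hij, h⟩; exact lb x i j x hx (Or.inr rfl) hij h
  · intro g
    set a := g.1.val with hav
    set b := g.2.val with hbv
    have haf : ((a : ℕ) : ZMod (3*x)) = g.1 := by simp [hav, ZMod.natCast_val, ZMod.cast_id]
    have hbf : ((b : ℕ) : ZMod x) = g.2 := by simp [hbv, ZMod.natCast_val, ZMod.cast_id]
    have hal : a < 3*x := ZMod.val_lt g.1
    have hbl : b < x := ZMod.val_lt g.2
    set c := (a + b) % (3*x) with hc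
    have hcl : c < 3*x := Nat.mod_lt _ (by omega)
    have hcc : ((c : ℕ) : ZMod (3*x)) = ((a + b : ℕ) : ZMod (3*x)) := by
      rw [hc, ZMod.natCast_mod]
    by_cases hcase : c < 2*x
    · refine ⟨c, b, by omega, ?_⟩
      rw [hsmul, Prod.ext_iff]
      constructor
      · rw [hcc, ← haf]
        push_cast
        ring
      · exact hbf.symm
    · refine ⟨c - 2*x, b + x, by omega, ?_⟩
      rw [hsmul, Prod.ext_iff]
      constructor
      · have h1 : ((c - 2*x : ℕ) : ZMod (3*x)) = (c : ZMod (3*x)) - ((2*x : ℕ) : ZMod (3*x)) := by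
          rw [Nat.cast_sub (by omega)]
        have h3x : ((3*x : ℕ) : ZMod (3*x)) = 0 := ZMod.natCast_self _
        rw [h1, hcc, ← haf]
        push_cast at h3x ⊢
        linear_combination h3x
      · have hxz : ((x : ℕ) : ZMod x) = 0 := ZMod.natCast_self _
        rw [← hbf]
        push_cast at hxz ⊢
        linear_combination -hxz
end

section
/- Let Γ be a finite abelian group of order m and A ⊆ Γ with |A| = 2 and diam(Cay(Γ,A)) ≤ d. Then m ≤ ⌊(d+2)²/3⌋. -/
/-!
Order `ℕ × ℕ` first by `i + j`, then by `j`, and call `(i, j)` standard if it is the least pair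
representing `i • a + j • b`. Every element of `Γ` has exactly one standard representative, and
since the order is translation invariant the standard pairs form a staircase, which the diameter
bound puts inside the triangle `i + j ≤ d`. An inner corner `(i + 1, j + 1)` of the staircase
yields the relation `(i + 1) • a + (j + 1) • b = 0`, so two inner corners would give two standard
representatives of `-b`. Hence the staircase is an L-shape `[0, s) × [0, q) ∪ [s, p) × [0, t)`
with `s + q, p + t ≤ d + 2`, and such a shape has at most `(d + 2)² / 3` cells.
-/

open Finset

section Staircase

lemma exists_forall_iff_lt_of_antitone {Q : ℕ → Prop} (hQ : Antitone Q) {N : ℕ} (hN : ¬ Q N) :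
    ∃ n, ∀ m, Q m ↔ m < n := by
  classical
  refine ⟨Nat.find (p := fun n => ¬ Q n) ⟨N, hN⟩, fun m => ?_⟩
  rw [Nat.lt_find_iff]
  exact ⟨fun h k hk => not_not.mpr (hQ hk h), fun h => not_not.mp (h m le_rfl)⟩

def IsInnerCorner (P : ℕ → ℕ → Prop) (i j : ℕ) : Prop :=
  P i (j + 1) ∧ P (i + 1) j ∧ ¬ P (i + 1) (j + 1)

variable {P : ℕ → ℕ → Prop} {d : ℕ}

lemma exists_lShape_cover (hP : ∀ i j i' j', i' ≤ i → j' ≤ j → P i j → P i' j')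
    (h00 : P 0 0) (hd : ∀ i j, P i j → i + j ≤ d)
    (hcorner : ∀ i j k l, IsInnerCorner P i j → IsInnerCorner P k l → i = k) :
    ∃ s q p t, s + q ≤ d + 2 ∧ p + t ≤ d + 2 ∧
      ∀ i j, P i j → (i < s ∧ j < q) ∨ (s ≤ i ∧ i < p ∧ j < t) := by
  have hcol : ∀ i, ∃ n, ∀ j, P i j ↔ j < n := fun i =>
    exists_forall_iff_lt_of_antitone (fun _ _ hm => hP _ _ _ _ le_rfl hm)
      (N := d + 1) fun h => by have := hd _ _ h; omega
  have hrow : ∀ j, ∃ n, ∀ i, P i j ↔ i < n := fun j =>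
    exists_forall_iff_lt_of_antitone (fun _ _ hm => hP _ _ _ _ hm le_rfl)
      (N := d + 1) fun h => by have := hd _ _ h; omega
  obtain ⟨q, hq⟩ := hcol 0
  obtain ⟨p, hp⟩ := hrow 0
  obtain ⟨t, ht⟩ := hcol (p - 1)
  obtain ⟨s, hs⟩ := hrow (q - 1)
  have hq0 := (hq 0).mp h00
  have hp0 := (hp 0).mp h00
  have hs_pos : 0 < s := (hs 0).mp ((hq _).mpr (by omega))
  have ht_pos : 0 < t := (ht 0).mp ((hp _).mpr (by omega))
  have hsq := hd _ _ ((hs (s - 1)).mpr (by omega))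
  have hpt := hd _ _ ((ht (t - 1)).mpr (by omega))
  refine ⟨s, q, p, t, by omega, by omega, fun i j hij => ?_⟩
  have hjq : j < q := (hq j).mp (hP _ _ _ _ (Nat.zero_le i) le_rfl hij)
  have hip : i < p := (hp i).mp (hP _ _ _ _ le_rfl (Nat.zero_le j) hij)
  by_contra! hout
  have hst : P s t := hP _ _ _ _ (by omega) (by omega) hij
  obtain ⟨u, hu⟩ := hcol s
  obtain ⟨w, hw⟩ := hrow t
  have htu := (hu t).mp hst
  have hsw := (hw s).mp hst
  have huq : u ≤ q - 1 := not_lt.mp fun h => lt_irrefl s ((hs s).mp ((hu _).mpr h))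
  have hwp : w ≤ p - 1 := not_lt.mp fun h => lt_irrefl t ((ht t).mp ((hw _).mpr h))
  -- `(s, t)` lies strictly inside the L, so column `s` and row `t` each end in an inner corner
  have hc₁ : IsInnerCorner P (s - 1) (u - 1) := by
    refine ⟨hP _ _ _ _ le_rfl (by omega) ((hs (s - 1)).mpr (by omega)), ?_, ?_⟩
    · rw [Nat.sub_add_cancel hs_pos]; exact (hu _).mpr (by omega)
    · rw [Nat.sub_add_cancel hs_pos, hu]; omega
  have hc₂ : IsInnerCorner P (w - 1) (t - 1) := by
    refine ⟨?_, hP _ _ _ _ (by omega) le_rfl ((ht (t - 1)).mpr (by omega)), ?_⟩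
    · rw [Nat.sub_add_cancel ht_pos]; exact (hw _).mpr (by omega)
    · rw [Nat.sub_add_cancel ht_pos, hw]; omega
  have := hcorner _ _ _ _ hc₁ hc₂
  omega

lemma three_mul_lShape_card_le {s q p t D : ℕ} (h₁ : s + q ≤ D) (h₂ : p + t ≤ D) :
    3 * (s * q + (p - s) * t) ≤ D ^ 2 := by
  rcases le_total s p with hsp | hps
  · obtain ⟨r, rfl⟩ := Nat.exists_eq_add_of_le hsp
    rw [Nat.add_sub_cancel_left]
    nlinarith [sq_nonneg ((2 * D : ℤ) - 3 * s - 3 * t), sq_nonneg ((s : ℤ) - t)]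
  · rw [Nat.sub_eq_zero_of_le hps]
    nlinarith [sq_nonneg ((2 * D : ℤ) - 3 * s)]

end Staircase

section StandardPairs

variable {Γ : Type*} [AddCommGroup Γ] (a b : Γ)

def IsStandard (i j : ℕ) : Prop :=
  ∀ i' j' : ℕ, i' • a + j' • b = i • a + j • b →
    i + j < i' + j' ∨ (i + j = i' + j' ∧ j ≤ j')

variable {a b}

lemma IsStandard.mono {i j i' j' : ℕ} (hi : i' ≤ i) (hj : j' ≤ j) (h : IsStandard a b i j) :
    IsStandard a b i' j' := by
  obtain ⟨u, rfl⟩ := Nat.exists_eq_add_of_le hi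
  obtain ⟨v, rfl⟩ := Nat.exists_eq_add_of_le hj
  intro k l hkl
  have := h (k + u) (l + v) <| by
    rw [add_nsmul, add_nsmul, add_nsmul, add_nsmul, add_add_add_comm, hkl, add_add_add_comm]
  omega

lemma IsStandard.eq {i j i' j' : ℕ} (h : IsStandard a b i j) (h' : IsStandard a b i' j')
    (he : i • a + j • b = i' • a + j' • b) : i = i' ∧ j = j' := by
  have := h i' j' he.symm
  have := h' i j he
  omega

lemma exists_isStandard (i j : ℕ) :
    ∃ i' j', IsStandard a b i' j' ∧ i' • a + j' • b = i • a + j • b := by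
  let key : ℕ × ℕ → ℕ ×ₗ ℕ := fun x => toLex (x.1 + x.2, x.2)
  obtain ⟨⟨i', j'⟩, he, hmin⟩ := (InvImage.wf key wellFounded_lt).has_min
    {x | x.1 • a + x.2 • b = i • a + j • b} ⟨(i, j), rfl⟩
  refine ⟨i', j', fun k l hkl => ?_, he⟩
  have := hmin (k, l) (hkl.trans he)
  simp only [InvImage, key, Prod.Lex.toLex_lt_toLex] at this
  omega

lemma IsStandard.add_le {d : ℕ} (hd : ∀ g : Γ, ∃ i j, i + j ≤ d ∧ i • a + j • b = g)
    {i j : ℕ} (h : IsStandard a b i j) : i + j ≤ d := by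
  obtain ⟨i', j', hij, he⟩ := hd (i • a + j • b)
  have := h i' j' he
  omega

lemma nsmul_add_nsmul_eq_zero_of_isInnerCorner {i j : ℕ}
    (h : IsInnerCorner (IsStandard a b) i j) : (i + 1) • a + (j + 1) • b = 0 := by
  obtain ⟨hleft, hbelow, hnot⟩ := h
  obtain ⟨k, l, hs, he⟩ := exists_isStandard (a := a) (b := b) (i + 1) (j + 1)
  have hl0 : l = 0 := by
    obtain _ | l := l
    · rfl
    refine absurd ?_ hnot
    have := (hs.mono le_rfl l.le_succ).eq hbelow <| add_right_cancel (b := b) <| by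
      rw [add_assoc, ← succ_nsmul, he, add_assoc, ← succ_nsmul]
    rwa [← this.1, ← this.2]
  have hk0 : k = 0 := by
    obtain _ | k := k
    · rfl
    refine absurd ?_ hnot
    subst hl0
    have := (hs.mono k.le_succ le_rfl).eq hleft <| add_right_cancel (b := a) <| by
      rw [add_right_comm, ← succ_nsmul, he, add_right_comm, ← succ_nsmul]
    rwa [← this.1, ← this.2]
  rw [← he, hk0, hl0, zero_nsmul, zero_nsmul, add_zero]

lemma IsInnerCorner.eq_of_isStandard {i j k l : ℕ} (h : IsInnerCorner (IsStandard a b) i j)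
    (h' : IsInnerCorner (IsStandard a b) k l) : i = k :=
  Nat.succ_injective (h.2.1.eq h'.2.1 <| add_right_cancel (b := b) <| by
    rw [add_assoc, ← succ_nsmul, nsmul_add_nsmul_eq_zero_of_isInnerCorner h, add_assoc,
      ← succ_nsmul, nsmul_add_nsmul_eq_zero_of_isInnerCorner h']).1

end StandardPairs

lemma three_mul_card_le_of_forall_exists_nsmul_add_nsmul {Γ : Type*} [AddCommGroup Γ] [Fintype Γ]
    {a b : Γ} {d : ℕ} (hd : ∀ g : Γ, ∃ i j, i + j ≤ d ∧ i • a + j • b = g) :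
    3 * Fintype.card Γ ≤ (d + 2) ^ 2 := by
  obtain ⟨s, q, p, t, h₁, h₂, hcover⟩ := exists_lShape_cover (P := IsStandard a b)
    (fun _ _ _ _ hi hj h => h.mono hi hj) (fun _ _ _ => by omega) (fun _ _ h => h.add_le hd)
    fun _ _ _ _ => IsInnerCorner.eq_of_isStandard
  refine le_trans (Nat.mul_le_mul_left 3 ?_) (three_mul_lShape_card_le h₁ h₂)
  calc Fintype.card Γ = #(univ : Finset Γ) := card_univ.symm
    _ ≤ #(range s ×ˢ range q ∪ Ico s p ×ˢ range t) := by
      refine card_le_card_of_surjOn (fun x => x.1 • a + x.2 • b) fun g _ => ?_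
      obtain ⟨i, j, -, rfl⟩ := hd g
      obtain ⟨i', j', hs, he⟩ := exists_isStandard (a := a) (b := b) i j
      refine ⟨(i', j'), ?_, he⟩
      simpa [and_assoc] using hcover i' j' hs
    _ ≤ s * q + (p - s) * t := (card_union_le _ _).trans (by simp)

theorem stmt_12 (Γ : Type*) [AddCommGroup Γ] [Fintype Γ] (A : Finset Γ)
    (hA : A.card = 2) (d : ℕ)
    (hdiam : ∀ g : Γ, ∃ l : Multiset Γ,
      (∀ a ∈ l, a ∈ A) ∧ Multiset.card l ≤ d ∧ l.sum = g) :
    (Fintype.card Γ : ℤ) ≤ ⌊(((d : ℚ) + 2) ^ 2 / 3)⌋ := by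
  classical
  obtain ⟨a, b, hab, rfl⟩ := card_eq_two.mp hA
  have hd : ∀ g : Γ, ∃ i j, i + j ≤ d ∧ i • a + j • b = g := by
    intro g
    obtain ⟨l, hl, hcard, rfl⟩ := hdiam g
    refine ⟨l.count a, l.count b, ?_, ?_⟩
    · rwa [← sum_pair (f := l.count) hab, Multiset.sum_count_eq_card hl]
    · rw [sum_multiset_count_of_subset l _ fun x hx => hl x (Multiset.mem_toFinset.mp hx),
        sum_pair hab]
  have key := three_mul_card_le_of_forall_exists_nsmul_add_nsmul hd
  rw [Int.le_floor, le_div_iff₀' three_pos]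
  exact_mod_cast key
end

section
/- Let x ≥ 1 be an integer and m = 3x² + 2x. In ℤ/m with A = {1, m − 3x} (i.e., b ≡ −3x mod m), every residue is a sum of at most 3x − 1 elements of A, i.e., Cay(ℤ/m, {1, −3x}) has diameter at most 3x − 1. -/
lemma aux_stmt14 (x n : ℕ) (hx : 1 ≤ x) (hn : n < 3 * x ^ 2 + 2 * x) :
    ∃ i j k : ℕ, i + j ≤ 3 * x - 1 ∧ n + 3 * x * j = i + k * (3 * x ^ 2 + 2 * x) := by
  have h3x : 0 < 3 * x := by omega
  have hq := Nat.div_add_mod n (3 * x)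
  set q := n / (3 * x) with hqdef
  set r := n % (3 * x) with hrdef
  have hr : r < 3 * x := Nat.mod_lt _ h3x
  have hqx : q ≤ x := by
    by_contra h
    have h1 : x + 1 ≤ q := by omega
    nlinarith
  have hq' : (3 * x * q + r : ℤ) = (n : ℤ) := by exact_mod_cast hq
  by_cases h0 : n ≤ 3 * x - 1
  · exact ⟨n, 0, 0, by omega, by ring⟩
  · have hq1 : 1 ≤ q := by
      rcases Nat.eq_zero_or_pos q with h | h
      · rw [h] at hq
        simp at hq
        omega
      · exact h
    by_cases h1 : 2 * x ≤ r
    · refine ⟨r - 2 * x, x - q, 1, by omega, ?_⟩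
      zify [h1, hqx]
      linear_combination -hq'
    · by_cases h2 : r + 2 ≤ x + q
      · refine ⟨r + x, x + 1 - q, 1, by omega, ?_⟩
        zify [show q ≤ x + 1 by omega]
        linear_combination -hq'
      · refine ⟨r - x, 2 * x + 1 - q, 2, by omega, ?_⟩
        zify [show x ≤ r by omega, show q ≤ 2 * x + 1 by omega]
        linear_combination -hq'

theorem stmt_14 (x : ℕ) (hx : 1 ≤ x) :
    ∀ g : ZMod (3 * x ^ 2 + 2 * x), ∃ i j : ℕ, i + j ≤ 3 * x - 1 ∧
      g = i • (1 : ZMod (3 * x ^ 2 + 2 * x))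
          + j • (-((3 * x : ℕ) : ZMod (3 * x ^ 2 + 2 * x))) := by
  intro g
  have hm : 0 < 3 * x ^ 2 + 2 * x := by nlinarith
  haveI : NeZero (3 * x ^ 2 + 2 * x) := ⟨hm.ne'⟩
  obtain ⟨i, j, k, hij, heq⟩ := aux_stmt14 x g.val hx (ZMod.val_lt g)
  refine ⟨i, j, hij, ?_⟩
  have hcast : ((g.val + 3 * x * j : ℕ) : ZMod (3 * x ^ 2 + 2 * x))
      = ((i + k * (3 * x ^ 2 + 2 * x) : ℕ) : ZMod (3 * x ^ 2 + 2 * x)) := by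
    rw [heq]
  have hz : ((3 * x ^ 2 + 2 * x : ℕ) : ZMod (3 * x ^ 2 + 2 * x)) = 0 :=
    ZMod.natCast_self _
  push_cast at hcast hz
  rw [hz, mul_zero, add_zero] at hcast
  have hg : ((g.val : ℕ) : ZMod (3 * x ^ 2 + 2 * x)) = g := ZMod.natCast_rightInverse g
  rw [hg] at hcast
  simp only [nsmul_eq_mul, smul_neg, mul_one]
  push_cast
  linear_combination hcast
end

section
/- Let x ≥ 1 be an integer and m = 3x² + 4x + 1. In ℤ/m with generators A = {1, m − (3x+2)}, every residue is a sum of at most 3x elements of A, i.e., Cay(ℤ/m, A) has diameter at most 3x. -/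
lemma key_15 (x n : ℕ) (hx : 1 ≤ x) (hn : n < 3 * x ^ 2 + 4 * x + 1) :
    ∃ i j k : ℕ, i + j ≤ 3 * x ∧
      n + j * (3 * x + 2) = i + k * (3 * x ^ 2 + 4 * x + 1) := by
  by_cases h0 : n ≤ 3 * x
  · exact ⟨n, 0, 0, by omega, by ring⟩
  · have hn2 : 2 * x + 1 ≤ n := by omega
    obtain ⟨t, r, hrlt, hneq, htlt⟩ :
        ∃ t r : ℕ, r < 3 * x + 2 ∧ n = 2 * x + 1 + t * (3 * x + 2) + r ∧ t < x := by
      refine ⟨(n - (2 * x + 1)) / (3 * x + 2), (n - (2 * x + 1)) % (3 * x + 2),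
        Nat.mod_lt _ (by omega), ?_, ?_⟩
      · have := Nat.div_add_mod (n - (2 * x + 1)) (3 * x + 2)
        rw [Nat.mul_comm] at this
        omega
      · apply Nat.div_lt_of_lt_mul
        have h1 : (3 * x + 2) * x = 3 * x ^ 2 + 2 * x := by ring
        omega
    obtain ⟨u, hu⟩ : ∃ u, x = t + 1 + u := ⟨x - t - 1, by omega⟩
    by_cases hc : r ≤ 2 * x + t
    · refine ⟨r, u + 1, 1, by omega, ?_⟩
      subst hneq hu; ring
    · obtain ⟨v, hv⟩ : ∃ v, r = 2 * x + 1 + v := ⟨r - (2 * x + 1), by omega⟩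
      refine ⟨v, t + 2 * u + 2, 2, by omega, ?_⟩
      subst hneq hv hu; ring

theorem stmt_15 (x : ℕ) (hx : 1 ≤ x) :
    ∀ g : ZMod (3 * x ^ 2 + 4 * x + 1), ∃ i j : ℕ, i + j ≤ 3 * x ∧
      g = i • (1 : ZMod (3 * x ^ 2 + 4 * x + 1))
          + j • (-((3 * x + 2 : ℕ) : ZMod (3 * x ^ 2 + 4 * x + 1))) := by
  intro g
  haveI : NeZero (3 * x ^ 2 + 4 * x + 1) := ⟨by omega⟩
  have hn : g.val < 3 * x ^ 2 + 4 * x + 1 := ZMod.val_lt g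
  obtain ⟨i, j, k, hij, heq⟩ := key_15 x g.val hx hn
  refine ⟨i, j, hij, ?_⟩
  have hg : ((g.val : ℕ) : ZMod (3 * x ^ 2 + 4 * x + 1)) = g :=
    ZMod.natCast_rightInverse g
  have hm : ((3 * x ^ 2 + 4 * x + 1 : ℕ) : ZMod (3 * x ^ 2 + 4 * x + 1)) = 0 :=
    ZMod.natCast_self _
  have hcast := congrArg (fun n : ℕ => (n : ZMod (3 * x ^ 2 + 4 * x + 1))) heq
  push_cast at hcast hm ⊢
  simp only [nsmul_eq_mul, mul_one, mul_neg]
  linear_combination hcast - hg + (k : ZMod (3 * x ^ 2 + 4 * x + 1)) * hm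
end
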